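/- Let V = (v₁,…,v_N) be an m×N real matrix, let S ⊆ [N] with |S| = s, set k = ⌈s/2⌉, and let Π be any orthogonal projection in ℝ^m of rank m − k + 1. Then (1/s) Σ_{i∈S} ‖Π v_i‖₂² ≥ σ_min(V|_S)²/2; in particular there exists i ∈ S with ‖Π v_i‖₂² ≥ σ_min(V|_S)²/2. -/

import Mathlib

open Matrix
open scoped BigOperators

/-- The Euclidean norm of a vector. -/
noncomputable def enorm {ι : Type*} [Fintype ι] (v : ι → ℝ) : ℝ :=
  Real.sqrt (∑ i, (v i) ^ 2)

/-- The least singular value of a matrix. -/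
noncomputable def smin {ι κ : Type*} [Fintype ι] [Fintype κ] (B : Matrix ι κ ℝ) : ℝ :=
  ⨅ x : {x : κ → ℝ // _root_.enorm x = 1}, _root_.enorm (B.mulVec x)

/-- The submatrix of columns of `A` indexed by the finite set `S`. -/
def colSub {ι κ : Type*} (A : Matrix ι κ ℝ) (S : Finset κ) : Matrix ι {j // j ∈ S} ℝ :=
  A.submatrix id fun j => (j : κ)

/-! Put `Q = 1 - Π`, of rank at most `k - 1`. The kernel `F` of `Q V|_S` has dimension at least
`s - k + 1 ≥ s / 2`, and on `F` the matrices `Π V|_S` and `V|_S` agree, so `Π V|_S` maps each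
vector of an orthonormal basis of `F` to a vector of norm at least `σ_min(V|_S)`. By Bessel's
inequality, applied to each row of `Π V|_S`, the sum of these squared norms is at most the squared
Frobenius norm `∑_{i ∈ S} ‖Π v_i‖²`. -/

open Module

section Enorm

variable {ι κ : Type*} [Fintype ι] [Fintype κ]

lemma enorm_sq (v : ι → ℝ) : _root_.enorm v ^ 2 = ∑ i, v i ^ 2 :=
  Real.sq_sqrt (Finset.sum_nonneg fun _ _ => sq_nonneg _)

lemma enorm_ofLp (x : EuclideanSpace ℝ ι) : _root_.enorm x.ofLp = ‖x‖ := by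
  simp [_root_.enorm, EuclideanSpace.norm_eq]

lemma smin_nonneg (B : Matrix ι κ ℝ) : 0 ≤ smin B :=
  Real.iInf_nonneg fun _ => Real.sqrt_nonneg _

lemma smin_le_enorm_mulVec (B : Matrix ι κ ℝ) {x : κ → ℝ} (hx : _root_.enorm x = 1) :
    smin B ≤ _root_.enorm (B *ᵥ x) :=
  ciInf_le ⟨0, by rintro _ ⟨y, rfl⟩; exact Real.sqrt_nonneg _⟩ (⟨x, hx⟩ : {x // _ = _})

lemma Orthonormal.sum_enorm_mulVec_sq_le {ι' : Type*} [Fintype ι'] {f : ι' → EuclideanSpace ℝ κ}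
    (hf : Orthonormal ℝ f) (C : Matrix ι κ ℝ) :
    ∑ j, _root_.enorm (C *ᵥ (f j).ofLp) ^ 2 ≤ ∑ p, _root_.enorm (Cᵀ p) ^ 2 := by
  have bessel_row (l : ι) : ∑ j, (C *ᵥ (f j).ofLp) l ^ 2 ≤ ∑ p, C l p ^ 2 := by
    have h := hf.sum_inner_products_le (x := WithLp.toLp 2 (C l)) (s := Finset.univ)
    simp only [EuclideanSpace.norm_eq, PiLp.inner_apply, Real.norm_eq_abs, sq_abs] at h
    rw [Real.sq_sqrt (Finset.sum_nonneg fun _ _ => sq_nonneg _)] at h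
    simpa [Matrix.mulVec, dotProduct, mul_comm] using h
  simp only [enorm_sq]
  rw [Finset.sum_comm, Finset.sum_comm (γ := κ)]
  exact Finset.sum_le_sum fun l _ => bessel_row l

end Enorm

lemma finrank_ker_toEuclideanLin_add_rank {m n 𝕜 : Type*} [RCLike 𝕜] [Fintype m] [Fintype n]
    [DecidableEq n] (M : Matrix m n 𝕜) :
    finrank 𝕜 (LinearMap.ker M.toEuclideanLin) + M.rank = Fintype.card n := by
  rw [M.rank_eq_finrank_range_toLin (EuclideanSpace.basisFun m 𝕜).toBasis
    (EuclideanSpace.basisFun n 𝕜).toBasis, add_comm, ← Matrix.toEuclideanLin_eq_toLin_orthonormal,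
    LinearMap.finrank_range_add_finrank_ker, finrank_euclideanSpace]

section Rank

variable {ι κ : Type*} [Fintype ι] [Fintype κ] [DecidableEq ι] [DecidableEq κ]

lemma rank_one_sub_add_rank {K : Type*} [Field K] {P : Matrix ι ι K} (hP : IsIdempotentElem P) :
    (1 - P).rank + P.rank = Fintype.card ι := by
  set e := Matrix.toLinAlgEquiv' (n := ι) (R := K)
  have h := LinearMap.finrank_range_add_finrank_ker (e P)
  rw [LinearMap.IsIdempotentElem.ker_eq_range_one_sub (hP.map e), ← map_one e, ← map_sub,
    Module.finrank_fintype_fun_eq_card] at h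
  rw [add_comm]
  exact h

lemma card_add_rank_le_finrank_ker_add_card {𝕜 : Type*} [RCLike 𝕜] {P : Matrix ι ι 𝕜}
    (hP : IsIdempotentElem P) (A : Matrix ι κ 𝕜) :
    Fintype.card κ + P.rank ≤
      finrank 𝕜 (LinearMap.ker ((1 - P) * A).toEuclideanLin) + Fintype.card ι := by
  have := finrank_ker_toEuclideanLin_add_rank ((1 - P) * A)
  have := Matrix.rank_mul_le_left (1 - P) A
  have := rank_one_sub_add_rank hP
  omega

lemma finrank_ker_one_sub_mul_mul_smin_sq_le (P : Matrix ι ι ℝ) (A : Matrix ι κ ℝ) :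
    finrank ℝ (LinearMap.ker ((1 - P) * A).toEuclideanLin) * smin A ^ 2 ≤
      ∑ p, _root_.enorm ((P * A)ᵀ p) ^ 2 := by
  set F := LinearMap.ker ((1 - P) * A).toEuclideanLin
  let b := stdOrthonormalBasis ℝ F
  have fixed (x : F) :
      (P * A) *ᵥ (x : EuclideanSpace ℝ κ).ofLp = A *ᵥ (x : EuclideanSpace ℝ κ).ofLp := by
    have hx := congrArg WithLp.ofLp (LinearMap.mem_ker.mp x.2)
    rw [Matrix.ofLp_toLpLin, Matrix.toLin'_apply, Matrix.sub_mul, Matrix.one_mul,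
      Matrix.sub_mulVec, WithLp.ofLp_zero, sub_eq_zero] at hx
    exact hx.symm
  calc (finrank ℝ F : ℝ) * smin A ^ 2 = ∑ _j : Fin (finrank ℝ F), smin A ^ 2 := by simp
    _ ≤ ∑ j, _root_.enorm ((P * A) *ᵥ (b j : EuclideanSpace ℝ κ).ofLp) ^ 2 := by
      refine Finset.sum_le_sum fun j _ => ?_
      have hunit : _root_.enorm (b j : EuclideanSpace ℝ κ).ofLp = 1 := by
        rw [enorm_ofLp]
        exact b.norm_eq_one j
      rw [fixed]
      gcongr
      · exact smin_nonneg A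
      · exact smin_le_enorm_mulVec A hunit
    _ ≤ ∑ p, _root_.enorm ((P * A)ᵀ p) ^ 2 :=
      (b.orthonormal.comp_linearIsometry F.subtypeₗᵢ).sum_enorm_mulVec_sq_le (P * A)

end Rank

theorem projection_preserves_smin_general {m N : ℕ} (V : Matrix (Fin m) (Fin N) ℝ)
    (S : Finset (Fin N)) (s : ℕ) (hs : s = S.card) (hs0 : 0 < s)
    (k : ℕ) (hk : k = (s + 1) / 2)
    (Pr : Matrix (Fin m) (Fin m) ℝ) (hproj : Pr * Pr = Pr)
    (hrank : Pr.rank = m - k + 1) :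
    smin (colSub V S) ^ 2 / 2 ≤
        (1 / (s : ℝ)) * ∑ i ∈ S, _root_.enorm (Pr.mulVec fun l => V l i) ^ 2 ∧
      ∃ i ∈ S, smin (colSub V S) ^ 2 / 2 ≤ _root_.enorm (Pr.mulVec fun l => V l i) ^ 2 := by
  set A := colSub V S
  set d := finrank ℝ (LinearMap.ker ((1 - Pr) * A).toEuclideanLin)
  have hcount := card_add_rank_le_finrank_ker_add_card hproj A
  rw [Fintype.card_coe, Fintype.card_fin, hrank, ← hs] at hcount
  have hsd : (s : ℝ) ≤ 2 * d := by exact_mod_cast (by omega : s ≤ 2 * d)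
  have hcols : ∑ p, _root_.enorm ((Pr * A)ᵀ p) ^ 2 =
      ∑ i ∈ S, _root_.enorm (Pr *ᵥ fun l => V l i) ^ 2 :=
    Finset.sum_coe_sort S fun i => _root_.enorm (Pr *ᵥ fun l => V l i) ^ 2
  have hsum : s * (smin A ^ 2 / 2) ≤ ∑ i ∈ S, _root_.enorm (Pr *ᵥ fun l => V l i) ^ 2 :=
    calc s * (smin A ^ 2 / 2) ≤ d * smin A ^ 2 := by nlinarith [sq_nonneg (smin A)]
      _ ≤ _ := hcols ▸ finrank_ker_one_sub_mul_mul_smin_sq_le Pr A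
  refine ⟨?_, Finset.exists_le_of_sum_le (Finset.card_pos.mp (hs ▸ hs0)) ?_⟩
  · rw [one_div, ← div_eq_inv_mul, le_div_iff₀ (by exact_mod_cast hs0)]
    linarith
  · simpa [← hs] using hsum

/-- For `S ⊆ [N]` with `|S| = s`, `k = ⌈s/2⌉`, and any orthogonal projection `Pr` of rank
`m − k + 1`, the average of `‖Pr v_i‖₂²` over `i ∈ S` is at least `σ_min(V|_S)²/2`; in
particular some `i ∈ S` has `‖Pr v_i‖₂² ≥ σ_min(V|_S)²/2`. -/
theorem projection_preserves_smin {m N : ℕ} (V : Matrix (Fin m) (Fin N) ℝ)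
    (S : Finset (Fin N)) (s : ℕ) (hs : s = S.card) (hs0 : 0 < s)
    (k : ℕ) (hk : k = (s + 1) / 2) (hkm : k ≤ m)
    (Pr : Matrix (Fin m) (Fin m) ℝ) (hproj : Pr * Pr = Pr) (hsymm : Prᵀ = Pr)
    (hrank : Pr.rank = m - k + 1) :
    smin (colSub V S) ^ 2 / 2 ≤
        (1 / (s : ℝ)) * ∑ i ∈ S, _root_.enorm (Pr.mulVec fun l => V l i) ^ 2 ∧
      ∃ i ∈ S, smin (colSub V S) ^ 2 / 2 ≤ _root_.enorm (Pr.mulVec fun l => V l i) ^ 2 :=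
  projection_preserves_smin_general V S s hs hs0 k hk Pr hproj hrank
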